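/- arXiv:1409.1313 — 3 statements merged into one kernel-verified Lean document; each statement's English description precedes it below -/
import Mathlib

section
/- Let k ≥ 1 and let n_1, …, n_k ≥ 2 be integers. For each i, let S_i be the commutative monoid obtained by adjoining a zero (absorbing) element ∞_i to a cyclic group C_{n_i} of order n_i, and let S = S_1 × S_2 × ⋯ × S_k be the direct product of these monoids. Then D(S) = D(U(S)), where U(S) ≅ C_{n_1} × ⋯ × C_{n_k} is the group of units of S. -/
/-- The Davenport constant of a finite commutative monoid `M`: the least positive
integer `d` such that every sequence (multiset) over `M` of length at least `d` is
reducible, i.e. has a proper subsequence (possibly empty) with the same product. -/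
noncomputable def DavenportM (M : Type*) [CommMonoid M] : ℕ :=
  sInf {d : ℕ | 0 < d ∧ ∀ T : Multiset M, d ≤ Multiset.card T →
    ∃ T' : Multiset M, T' ≤ T ∧ T' ≠ T ∧ T'.prod = T.prod}

/-- The (classical) Davenport constant of a finite abelian group `G`: the least positive
integer `d` such that every sequence (multiset) over `G` of length at least `d` has a
nonempty subsequence whose product is the identity. -/
noncomputable def DavenportG (G : Type*) [CommGroup G] : ℕ :=
  sInf {d : ℕ | 0 < d ∧ ∀ T : Multiset G, d ≤ Multiset.card T →
    ∃ T' : Multiset G, T' ≤ T ∧ T' ≠ 0 ∧ T'.prod = 1}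

/-!
For `S = ∏ i, G₀ i` with every `G₀ i` a group with zero, a sequence of units that is reducible in
`S` loses a nonempty product-one subsequence, so `D(Sˣ) ≤ D(S)`. Conversely, let `T` be a sequence
over `S` of length at least `D(Sˣ)` and let `Z` be the set of coordinates at which some term of `T`
vanishes. Keep one witness term for each `i ∈ Z`, replace the zero coordinates of the other terms
by `1`, and pad with `|Z|` units, one for each `i ∈ Z`, that are nontrivial at `i` and `1`
elsewhere. The padding is product-one free, so the product-one subsequence given by `D(Sˣ)`
contains original terms, and their product is `1` off `Z`. Removing them from `T` keeps its
product: off `Z` they contribute `1`, and on `Z` the product stays `0` because of the witnesses.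
-/

open Multiset
open scoped Finset

namespace Multiset

variable {α β ι : Type*}

theorem exists_le_map_eq_of_le_map {f : α → β} {s : Multiset β} {t : Multiset α}
    (h : s ≤ t.map f) : ∃ u ≤ t, u.map f = s := by
  induction s using Quotient.inductionOn
  induction t using Quotient.inductionOn
  obtain ⟨l, hperm, hsub⟩ := coe_le.mp h
  obtain ⟨l', hl', rfl⟩ := List.sublist_map_iff.mp hsub
  exact ⟨l', hl'.subperm, Quot.sound hperm⟩

theorem exists_le_le_eq_add_of_le_add [DecidableEq α] {s t u : Multiset α} (h : u ≤ s + t) :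
    ∃ s' ≤ s, ∃ t' ≤ t, u = s' + t' :=
  ⟨u - (u - s), tsub_tsub_le, u - s, tsub_le_iff_left.mpr h,
    (tsub_add_cancel_of_le tsub_le_self).symm⟩

theorem exists_le_card_le_forall_exists_mem (s : Multiset α) (Z : Finset ι) {p : ι → α → Prop}
    (h : ∀ i ∈ Z, ∃ a ∈ s, p i a) : ∃ w ≤ s, card w ≤ #Z ∧ ∀ i ∈ Z, ∃ a ∈ w, p i a := by
  classical
  choose f hfs hfp using h
  refine ⟨(Z.attach.image fun i => f i.1 i.2).val, (le_iff_subset (Finset.nodup _)).mpr ?_,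
    Finset.card_image_le.trans_eq Finset.card_attach, fun i hi => ⟨f i hi, ?_, hfp i hi⟩⟩
  · intro a ha
    obtain ⟨i, -, rfl⟩ := Finset.mem_image.mp ha
    exact hfs i.1 i.2
  · exact Finset.mem_image_of_mem (fun i => f i.1 i.2) (Finset.mem_attach _ ⟨i, hi⟩)

end Multiset

theorem Units.val_multiset_prod {M : Type*} [CommMonoid M] (s : Multiset Mˣ) :
    (s.prod : M) = (s.map Units.val).prod :=
  map_multiset_prod (Units.coeHom M) s

section Davenport

variable {M G : Type*} [CommMonoid M] [CommGroup G]

theorem davenportM_le {d : ℕ} (hd : 0 < d)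
    (h : ∀ T : Multiset M, d ≤ card T → ∃ T' ≤ T, T' ≠ T ∧ T'.prod = T.prod) :
    DavenportM M ≤ d := by
  unfold DavenportM
  exact Nat.sInf_le ⟨hd, h⟩

theorem davenportM_pos {d : ℕ} (hd : 0 < d)
    (h : ∀ T : Multiset M, d ≤ card T → ∃ T' ≤ T, T' ≠ T ∧ T'.prod = T.prod) :
    0 < DavenportM M := by
  unfold DavenportM
  show 1 ≤ _
  exact le_csInf ⟨d, hd, h⟩ fun _ hd => hd.1

theorem exists_prod_eq_prod_of_davenportM_le (hM : 0 < DavenportM M) {T : Multiset M}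
    (hT : DavenportM M ≤ card T) : ∃ T' ≤ T, T' ≠ T ∧ T'.prod = T.prod :=
  (Nat.sInf_mem (Nat.nonempty_of_pos_sInf hM)).2 T hT

theorem davenportG_le {d : ℕ} (hd : 0 < d)
    (h : ∀ T : Multiset G, d ≤ card T → ∃ T' ≤ T, T' ≠ 0 ∧ T'.prod = 1) :
    DavenportG G ≤ d := by
  unfold DavenportG
  exact Nat.sInf_le ⟨hd, h⟩

-- Any bound will do: it only makes the set defining `DavenportG G` nonempty.
theorem exists_prod_eq_one_of_card_sq_le [Fintype G] (T : Multiset G)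
    (hT : Fintype.card G ^ 2 ≤ card T) : ∃ T' ≤ T, T' ≠ 0 ∧ T'.prod = 1 := by
  classical
  obtain ⟨g, -, hg⟩ : ∃ g ∈ Finset.univ, Fintype.card G ≤ T.count g := by
    refine Finset.exists_le_of_sum_le Finset.univ_nonempty ?_
    rw [Finset.sum_const, Finset.card_univ, smul_eq_mul, ← sq,
      sum_count_eq_card fun _ _ => Finset.mem_univ _]
    exact hT
  exact ⟨replicate (orderOf g) g, le_count_iff_replicate_le.mp (orderOf_le_card_univ.trans hg),
    card_pos.mp (by rw [card_replicate]; exact orderOf_pos g), by simp [pow_orderOf_eq_one]⟩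

theorem davenportG_pos [Finite G] : 0 < DavenportG G := by
  have := Fintype.ofFinite G
  unfold DavenportG
  show 1 ≤ _
  exact le_csInf ⟨_, by positivity, exists_prod_eq_one_of_card_sq_le⟩ fun _ hd => hd.1

theorem exists_prod_eq_one_of_davenportG_le [Finite G] {T : Multiset G}
    (hT : DavenportG G ≤ card T) : ∃ T' ≤ T, T' ≠ 0 ∧ T'.prod = 1 :=
  (Nat.sInf_mem (Nat.nonempty_of_pos_sInf davenportG_pos)).2 T hT

theorem davenportG_units_le_davenportM (hM : 0 < DavenportM M) :
    DavenportG Mˣ ≤ DavenportM M := by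
  classical
  refine davenportG_le hM fun T hT => ?_
  obtain ⟨T₀', hle, hne, hprod⟩ :=
    exists_prod_eq_prod_of_davenportM_le hM (T := T.map Units.val) (by rwa [card_map])
  obtain ⟨T₀, hT₀, rfl⟩ := exists_le_map_eq_of_le_map hle
  have hsplit : T - T₀ + T₀ = T := tsub_add_cancel_of_le hT₀
  refine ⟨T - T₀, tsub_le_self, fun h => hne ?_, ?_⟩
  · rw [← hsplit, h, zero_add]
  · have hprodU : T₀.prod = T.prod :=
      Units.ext (by simpa only [Units.val_multiset_prod] using hprod)
    have := congrArg prod hsplit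
    rw [prod_add, hprodU] at this
    exact mul_eq_right.mp this

theorem exists_prod_mem_of_davenportG_le_card_add [Finite G] (K : Subgroup G) {A B : Multiset G}
    (hBK : ∀ b ∈ B, b ∈ K) (hBfree : ∀ B' ≤ B, B' ≠ 0 → B'.prod ≠ 1)
    (hcard : DavenportG G ≤ card A + card B) : ∃ A' ≤ A, A' ≠ 0 ∧ A'.prod ∈ K := by
  classical
  obtain ⟨C, hC, hC0, hC1⟩ := exists_prod_eq_one_of_davenportG_le (T := A + B) (by rwa [card_add])
  obtain ⟨A', hA', B', hB', rfl⟩ := exists_le_le_eq_add_of_le_add hC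
  refine ⟨A', hA', fun hA'0 => ?_, ?_⟩
  · subst hA'0
    rw [zero_add] at hC0 hC1
    exact hBfree B' hB' hC0 hC1
  · rw [prod_add, mul_eq_one_iff_eq_inv] at hC1
    exact hC1 ▸ K.inv_mem (K.multiset_prod_mem _ fun b hb => hBK b (mem_of_le hB' hb))

end Davenport

theorem Pi.prod_ne_one_of_le_map_mulSingle {ι : Type*} {M : ι → Type*} [∀ i, CommMonoid (M i)]
    [DecidableEq ι] {x : ∀ i, M i} (hx : ∀ i, x i ≠ 1) {Z : Finset ι} {B : Multiset (∀ i, M i)}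
    (hB : B ≤ Z.val.map fun j => Pi.mulSingle j (x j)) (hB0 : B ≠ 0) : B.prod ≠ 1 := by
  obtain ⟨s, hsZ, rfl⟩ := exists_le_map_eq_of_le_map hB
  obtain ⟨i, hi⟩ := exists_mem_of_ne_zero (by simpa using hB0 : s ≠ 0)
  intro h
  change ∏ j ∈ ⟨s, nodup_of_le hsZ Z.nodup⟩, Pi.mulSingle j (x j) = 1 at h
  have := congrFun h i
  rw [Finset.prod_apply, Finset.prod_pi_mulSingle, if_pos (Finset.mem_mk.mpr hi)] at this
  exact hx i this

section PiGroupWithZero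

variable {ι : Type*} {G₀ : ι → Type*} [∀ i, CommGroupWithZero (G₀ i)]

open Classical in
noncomputable def unitFillingZeros (t : ∀ i, G₀ i) : (∀ i, G₀ i)ˣ :=
  MulEquiv.piUnits.symm fun i => if h : t i = 0 then 1 else Units.mk0 (t i) h

theorem unitFillingZeros_val_apply {t : ∀ i, G₀ i} {i : ι} (h : t i ≠ 0) :
    (unitFillingZeros t).val i = t i := by
  simp [unitFillingZeros, h]

variable (G₀) in
def unitsSupportedOn (Z : Finset ι) : Subgroup (∀ i, G₀ i)ˣ :=
  (Subgroup.pi (↑Z)ᶜ fun _ => ⊥).comap MulEquiv.piUnits.toMonoidHom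

theorem mem_unitsSupportedOn {Z : Finset ι} {u : (∀ i, G₀ i)ˣ} :
    u ∈ unitsSupportedOn G₀ Z ↔ ∀ i ∉ Z, u.val i = 1 := by
  simp [unitsSupportedOn, Subgroup.mem_pi, Units.ext_iff]

variable [Fintype ι] [∀ i, Finite (G₀ i)] [∀ i, Nontrivial (G₀ i)ˣ]

theorem exists_prod_apply_eq_one_of_davenportG_le (Z : Finset ι) {R : Multiset (∀ i, G₀ i)}
    (hR : ∀ t ∈ R, ∀ i ∉ Z, t i ≠ 0) (hcard : DavenportG (∀ i, G₀ i)ˣ ≤ card R + #Z) :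
    ∃ R' ≤ R, R' ≠ 0 ∧ ∀ i ∉ Z, R'.prod i = 1 := by
  classical
  choose x hx using fun i => exists_ne (1 : (G₀ i)ˣ)
  set B := (Z.val.map fun j => Pi.mulSingle j (x j)).map MulEquiv.piUnits.symm
  have hBK : ∀ b ∈ B, b ∈ unitsSupportedOn G₀ Z := by
    simp only [B, map_map, mem_map, Finset.mem_val, mem_unitsSupportedOn]
    rintro _ ⟨j, hj, rfl⟩ i hi
    simp [Pi.mulSingle_eq_of_ne (ne_of_mem_of_not_mem hj hi).symm]
  have hBfree : ∀ B' ≤ B, B' ≠ 0 → B'.prod ≠ 1 := by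
    intro B' hB' hB'0 h
    obtain ⟨B'', hB'', rfl⟩ := exists_le_map_eq_of_le_map hB'
    rw [← map_multiset_prod, map_eq_one_iff _ MulEquiv.piUnits.symm.injective] at h
    exact Pi.prod_ne_one_of_le_map_mulSingle hx hB'' (by simpa using hB'0) h
  obtain ⟨A, hA, hA0, hAK⟩ := exists_prod_mem_of_davenportG_le_card_add _
    (A := R.map unitFillingZeros) hBK hBfree (by simpa [B] using hcard)
  obtain ⟨R', hR', rfl⟩ := exists_le_map_eq_of_le_map hA
  refine ⟨R', hR', by simpa using hA0, fun i hi => ?_⟩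
  rw [← mem_unitsSupportedOn.mp hAK i hi, Units.val_multiset_prod,
    Pi.multiset_prod_apply, Pi.multiset_prod_apply, map_map, map_map]
  exact congrArg prod (map_congr rfl fun t ht =>
    (unitFillingZeros_val_apply (hR t (mem_of_le hR' ht) i hi)).symm)

theorem exists_prod_eq_prod_of_davenportG_units_le {T : Multiset (∀ i, G₀ i)}
    (hT : DavenportG (∀ i, G₀ i)ˣ ≤ card T) : ∃ T' ≤ T, T' ≠ T ∧ T'.prod = T.prod := by
  classical
  set Z := Finset.univ.filter fun i => ∃ t ∈ T, t i = 0
  obtain ⟨W, hWT, hWZ, hW⟩ := T.exists_le_card_le_forall_exists_mem Z (p := fun i t => t i = 0)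
    fun i hi => (Finset.mem_filter.mp hi).2
  obtain ⟨R', hR', hR'0, hR'1⟩ := exists_prod_apply_eq_one_of_davenportG_le Z (R := T - W)
    (fun t ht i hi h0 =>
      hi (Finset.mem_filter.mpr ⟨Finset.mem_univ _, t, mem_of_le tsub_le_self ht, h0⟩))
    (by rw [card_sub hWT]; have := card_le_card hWT; omega)
  have hR'T : R' ≤ T := hR'.trans tsub_le_self
  have hWR' : W ≤ T - R' := le_tsub_of_add_le_right ((le_tsub_iff_left hWT).mp hR')
  have hsplit : T - R' + R' = T := tsub_add_cancel_of_le hR'T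
  refine ⟨T - R', tsub_le_self, fun h => hR'0 (add_eq_left.mp (by rwa [h] at hsplit)), ?_⟩
  conv_rhs => rw [← hsplit]
  funext i
  rw [prod_add, Pi.mul_apply]
  by_cases hi : i ∈ Z
  · obtain ⟨w, hw, hw0⟩ := hW i hi
    have h0 : (T - R').prod i = 0 := by
      rw [Pi.multiset_prod_apply]
      exact prod_eq_zero (hw0 ▸ mem_map_of_mem (· i) (mem_of_le hWR' hw))
    rw [h0, zero_mul]
  · rw [hR'1 i hi, mul_one]

theorem davenportM_pi_eq_davenportG_units : DavenportM (∀ i, G₀ i) = DavenportG (∀ i, G₀ i)ˣ :=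
  le_antisymm (davenportM_le davenportG_pos fun _ => exists_prod_eq_prod_of_davenportG_units_le)
    (davenportG_units_le_davenportM
      (davenportM_pos davenportG_pos fun _ => exists_prod_eq_prod_of_davenportG_units_le))

end PiGroupWithZero

theorem davenport_prod_withZero_cyclic_general (k : ℕ) (n : Fin k → ℕ)
    (hn : ∀ i, 2 ≤ n i) :
    DavenportM (∀ i, WithZero (Multiplicative (ZMod (n i)))) =
      DavenportG (∀ i, WithZero (Multiplicative (ZMod (n i))))ˣ := by
  have (i : Fin k) : NeZero (n i) := ⟨by have := hn i; omega⟩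
  have (i : Fin k) : Finite (WithZero (Multiplicative (ZMod (n i)))) :=
    inferInstanceAs (Finite (Option _))
  have (i : Fin k) : Nontrivial (WithZero (Multiplicative (ZMod (n i))))ˣ :=
    have := ZMod.nontrivial_iff.mpr (by have := hn i; omega : n i ≠ 1)
    WithZero.unitsWithZeroEquiv.toEquiv.nontrivial
  exact davenportM_pi_eq_davenportG_units

/-- For `k ≥ 1` and integers `n_1, …, n_k ≥ 2`, let `S` be the direct product of the
monoids obtained by adjoining a zero element to the cyclic groups `C_{n_i}`. Then
`D(S) = D(U(S))`, where `U(S) ≅ C_{n_1} × ⋯ × C_{n_k}` is the group of units of `S`. -/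
theorem davenport_prod_withZero_cyclic (k : ℕ) (hk : 1 ≤ k) (n : Fin k → ℕ)
    (hn : ∀ i, 2 ≤ n i) :
    DavenportM (∀ i, WithZero (Multiplicative (ZMod (n i)))) =
      DavenportG (∀ i, WithZero (Multiplicative (ZMod (n i))))ˣ :=
  davenport_prod_withZero_cyclic_general k n hn
end

section
/- Let p > 2 be a prime, and let S denote the multiplicative monoid of the quotient ring 𝔽_p[X]/⟨(X+1)²⟩. Then D(S) = D(U(S)), where U(S) is the group of units of S. -/
/-!
`S` is a local ring whose maximal ideal `m = (X + 1)` has square zero and whose residue field is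
`𝔽_p`. Split a sequence over `S` into units and nonunits. Two nonunits multiply to `0`, which is
then the product of the whole sequence, so they alone form a proper subsequence with the same
product. A single nonunit `a` sees the units only through their residues (`a * s = a * s'` when
`s ≡ s' mod m`), so a nonempty subsequence of units whose product has residue `1`, which exists
among `p - 1` units by pigeonhole in `𝔽_pˣ`, can be dropped. Without nonunits, reducibility is the
existence of a nonempty product-one subsequence in `U(S)`. All cases cover the lengths
`≥ D(U(S))` because `D(U(S)) ≥ p ≥ 3`, as `1 + (X + 1)` has order `p`; conversely, reducibility in
`S` of a sequence of units is reducibility in `U(S)`.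
-/

namespace Multiset

def IsReducible {M : Type*} [CommMonoid M] (T : Multiset M) : Prop :=
  ∃ T' ≤ T, T' ≠ T ∧ T'.prod = T.prod

section CommMonoid
variable {M : Type*} [CommMonoid M]

theorem isReducible_add_of_prod_eq {A B : Multiset M} (hB : B ≠ 0) (h : A.prod = (A + B).prod) :
    (A + B).IsReducible :=
  ⟨A, Multiset.le_add_right A B, fun hA => hB (by simpa using hA.symm), h⟩

theorem prod_map_units_val (T : Multiset Mˣ) : (T.map Units.val).prod = T.prod :=
  prod_hom T (Units.coeHom M)

theorem isReducible_map_units_iff {T : Multiset Mˣ} :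
    (T.map Units.val).IsReducible ↔ T.IsReducible := by
  constructor
  · rintro ⟨T', hle, hne, hprod⟩
    lift T' to Multiset Mˣ using fun x hx => by
      obtain ⟨u, -, rfl⟩ := mem_map.1 (mem_of_le hle hx)
      exact u.isUnit
    rw [map_le_map_iff Units.val_injective] at hle
    refine ⟨T', hle, fun h => hne (h ▸ rfl), Units.val_injective ?_⟩
    simpa only [prod_map_units_val] using hprod
  · rintro ⟨T', hle, hne, hprod⟩
    refine ⟨T'.map Units.val, map_le_map hle,
      fun h => hne (map_injective Units.val_injective h), ?_⟩
    simp only [prod_map_units_val, hprod]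

theorem exists_eq_map_units_add (T : Multiset M) :
    ∃ (U : Multiset Mˣ) (A : Multiset M), (∀ x ∈ A, ¬IsUnit x) ∧ T = U.map Units.val + A := by
  classical
  obtain ⟨U, hU⟩ : ∃ U : Multiset Mˣ, U.map Units.val = T.filter IsUnit :=
    CanLift.prf _ fun x hx => (mem_filter.1 hx).2
  exact ⟨U, _, fun x hx => (mem_filter.1 hx).2, by rw [hU, filter_add_not]⟩

end CommMonoid

section CommGroup
variable {G : Type*} [CommGroup G]

theorem isReducible_iff_exists_prod_eq_one {T : Multiset G} :
    T.IsReducible ↔ ∃ V ≤ T, V ≠ 0 ∧ V.prod = 1 := by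
  constructor
  · rintro ⟨T', hle, hne, hprod⟩
    obtain ⟨V, rfl⟩ := le_iff_exists_add.1 hle
    exact ⟨V, Multiset.le_add_left V T', fun hV => hne (by simp [hV]),
      by simpa [prod_add] using hprod.symm⟩
  · rintro ⟨V, hle, hne, hprod⟩
    obtain ⟨W, rfl⟩ := le_iff_exists_add.1 hle
    rw [add_comm]
    exact isReducible_add_of_prod_eq hne (by simp [prod_add, hprod])

theorem exists_le_map_prod_eq_one [Finite G] {α : Type*} (f : α → G) {T : Multiset α}
    (hT : Nat.card G ≤ card T) : ∃ V ≤ T, V ≠ 0 ∧ (V.map f).prod = 1 := by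
  set l := T.toList
  have hl : l.length = card T := length_toList T
  set prefixProd : Fin (Nat.card G + 1) → G := fun i => ((l.take i).map f).prod
  obtain ⟨i, j, hij, heq⟩ : ∃ i j, i < j ∧ prefixProd i = prefixProd j := by
    have hcard : Nat.card G < Nat.card (Fin (Nat.card G + 1)) := by simp
    obtain ⟨i, j, heq, hne⟩ := Function.not_injective_iff.1 fun h =>
      (Nat.card_le_card_of_injective _ h).not_gt hcard
    rcases lt_or_gt_of_ne hne with h | h
    exacts [⟨i, j, h, heq⟩, ⟨j, i, h, heq.symm⟩]
  set V := (l.drop i).take (j - i)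
  have hsplit : l.take j = l.take i ++ V := by
    rw [← List.take_add, Nat.add_sub_cancel' hij.le]
  refine ⟨V, ?_, ?_, ?_⟩
  · calc (V : Multiset α) ≤ l :=
          coe_le.2 ((List.take_sublist _ _).trans (List.drop_sublist _ _)).subperm
      _ = T := coe_toList T
  · have : 0 < V.length := by simp only [V, List.length_take, List.length_drop]; omega
    simpa [← List.length_pos_iff] using this
  · simp only [prefixProd, hsplit, List.map_append, List.prod_append] at heq
    simpa using heq

end CommGroup

theorem isReducible_cons_cons_of_mul_eq_zero {M₀ : Type*} [CommMonoidWithZero M₀]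
    {a b : M₀} {W : Multiset M₀} (hab : a * b = 0) (hW : W ≠ 0) :
    (a ::ₘ b ::ₘ W).IsReducible := by
  rw [show a ::ₘ b ::ₘ W = a ::ₘ b ::ₘ 0 + W by simp]
  exact isReducible_add_of_prod_eq hW (by simp [← mul_assoc, hab])

end Multiset

def davenportSet (M : Type*) [CommMonoid M] : Set ℕ :=
  {d | 0 < d ∧ ∀ T : Multiset M, d ≤ Multiset.card T → T.IsReducible}

section Davenport
open Multiset

variable {M G : Type*} [CommMonoid M] [CommGroup G]

theorem davenportM_eq_sInf : DavenportM M = sInf (davenportSet M) := rfl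

theorem davenportG_eq_sInf : DavenportG G = sInf (davenportSet G) := by
  simp only [DavenportG, davenportSet, isReducible_iff_exists_prod_eq_one]

theorem card_mem_davenportSet [Finite G] : Nat.card G ∈ davenportSet G :=
  ⟨Nat.card_pos, fun _ hT => isReducible_iff_exists_prod_eq_one.2 <| by
    simpa using exists_le_map_prod_eq_one id hT⟩

theorem davenportG_mem_davenportSet [Finite G] : DavenportG G ∈ davenportSet G :=
  davenportG_eq_sInf (G := G) ▸ Nat.sInf_mem ⟨_, card_mem_davenportSet⟩

theorem orderOf_le_of_mem_davenportSet {d : ℕ} (hd : d ∈ davenportSet G) (g : G) :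
    orderOf g ≤ d := by
  by_contra! h
  obtain ⟨V, hle, hne, hprod⟩ :=
    isReducible_iff_exists_prod_eq_one.1 (hd.2 (replicate d g) (by simp))
  obtain ⟨k, hk, rfl⟩ := le_replicate_iff.1 hle
  exact pow_ne_one_of_lt_orderOf (by rintro rfl; simp at hne) (hk.trans_lt h)
    (by simpa using hprod)

theorem davenportSet_subset_units : davenportSet M ⊆ davenportSet Mˣ :=
  fun _ ⟨hd, h⟩ => ⟨hd, fun T hT => isReducible_map_units_iff.1 (h _ (by simpa using hT))⟩

theorem davenportM_eq_davenportG_units_of_mem (h : DavenportG Mˣ ∈ davenportSet M) :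
    DavenportM M = DavenportG Mˣ := by
  rw [davenportG_eq_sInf] at h
  rw [davenportM_eq_sInf, davenportG_eq_sInf]
  exact le_antisymm (Nat.sInf_le h)
    (csInf_le_csInf (OrderBot.bddBelow _) ⟨_, h⟩ davenportSet_subset_units)

end Davenport

namespace IsLocalRing
open Multiset

variable {R : Type*} [CommRing R] [IsLocalRing R]

theorem mul_eq_zero_of_sq_eq_bot (hm : maximalIdeal R ^ 2 = ⊥) {a b : R}
    (ha : a ∈ maximalIdeal R) (hb : b ∈ maximalIdeal R) : a * b = 0 := by
  have h := Ideal.mul_mem_mul ha hb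
  rwa [← sq, hm, Ideal.mem_bot] at h

theorem mul_eq_self_of_residue_eq_one (hm : maximalIdeal R ^ 2 = ⊥) {a s : R}
    (ha : a ∈ maximalIdeal R) (hs : residue R s = 1) : a * s = a := by
  have : s - 1 ∈ maximalIdeal R := by
    rw [← residue_eq_zero_iff, map_sub, hs, map_one, sub_self]
  linear_combination mul_eq_zero_of_sq_eq_bot hm ha this

theorem isReducible_cons_map_units (hm : maximalIdeal R ^ 2 = ⊥) [Finite (ResidueField R)]
    {a : R} (ha : a ∈ maximalIdeal R) {U : Multiset Rˣ}
    (hU : Nat.card (ResidueField R)ˣ ≤ card U) : (a ::ₘ U.map Units.val).IsReducible := by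
  obtain ⟨V, hle, hne, hprod⟩ :=
    exists_le_map_prod_eq_one (Units.map (residue R).toMonoidHom) hU
  obtain ⟨W, rfl⟩ := Multiset.le_iff_exists_add.1 hle
  have hres : residue R (V.map Units.val).prod = 1 := by
    rw [prod_hom V, Units.ext_iff] at hprod
    simpa [prod_map_units_val] using hprod
  rw [map_add, add_comm, ← cons_add]
  refine isReducible_add_of_prod_eq (by simpa using hne) ?_
  rw [prod_add, prod_cons, mul_eq_self_of_residue_eq_one hm (Ideal.mul_mem_right _ _ ha) hres]

theorem isReducible_of_sq_eq_bot (hm : maximalIdeal R ^ 2 = ⊥) [Finite (ResidueField R)]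
    {d : ℕ} (hd : 2 < d) (hk : Nat.card (ResidueField R) ≤ d)
    (hunits : ∀ T : Multiset Rˣ, d ≤ card T → T.IsReducible) {T : Multiset R}
    (hT : d ≤ card T) : T.IsReducible := by
  obtain ⟨U, A, hA, rfl⟩ := T.exists_eq_map_units_add
  rcases A.empty_or_exists_mem with rfl | ⟨a, haA⟩
  · rw [add_zero] at hT ⊢
    exact isReducible_map_units_iff.2 (hunits U (by simpa using hT))
  obtain ⟨A, rfl⟩ := exists_cons_of_mem haA
  have ha : a ∈ maximalIdeal R := (mem_maximalIdeal a).2 (hA a (mem_cons_self a A))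
  rcases A.empty_or_exists_mem with rfl | ⟨b, hbA⟩
  · rw [add_cons, add_zero] at hT ⊢
    refine isReducible_cons_map_units hm ha ?_
    simp only [card_cons, card_map] at hT
    rw [Nat.card_units]
    omega
  obtain ⟨W, rfl⟩ := exists_cons_of_mem hbA
  have hb : b ∈ maximalIdeal R :=
    (mem_maximalIdeal b).2 (hA b (mem_cons_of_mem (mem_cons_self b W)))
  rw [add_cons, add_cons] at hT ⊢
  refine isReducible_cons_cons_of_mul_eq_zero (mul_eq_zero_of_sq_eq_bot hm ha hb) ?_
  rintro h
  simp [h] at hT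
  omega

theorem davenportM_eq_davenportG_units_of_sq_eq_bot [Finite R] (hm : maximalIdeal R ^ 2 = ⊥)
    (hd : 2 < DavenportG Rˣ) (hk : Nat.card (ResidueField R) ≤ DavenportG Rˣ) :
    DavenportM R = DavenportG Rˣ :=
  have hG := davenportG_mem_davenportSet (G := Rˣ)
  have : Finite (ResidueField R) := .of_surjective _ residue_surjective
  davenportM_eq_davenportG_units_of_mem
    ⟨hG.1, fun _ hT => isReducible_of_sq_eq_bot hm hd hk hG.2 hT⟩

end IsLocalRing

theorem orderOf_one_add_of_sq_eq_zero {R : Type*} [CommRing R] (p : ℕ) [hp : Fact p.Prime]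
    [CharP R p] {ε : R} (hε : ε ≠ 0) (hε2 : ε ^ 2 = 0) : orderOf (1 + ε) = p :=
  orderOf_eq_prime
    (by rw [add_pow_char, one_pow, pow_eq_zero_of_le hp.out.two_le hε2, add_zero])
    (by simpa using hε)

namespace Polynomial
open IsLocalRing

variable {K : Type*} [Field K] (a : K)

local notation "𝔸" => K[X] ⧸ Ideal.span {(X - C a) ^ 2}
local notation "ε" => Ideal.Quotient.mk (Ideal.span {(X - C a) ^ 2}) (X - C a)

theorem mk_X_sub_C_sq : ε ^ 2 = 0 := by
  rw [← map_pow, Ideal.Quotient.eq_zero_iff_mem]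
  exact Ideal.mem_span_singleton_self _

theorem mk_X_sub_C_ne_zero : ε ≠ 0 := by
  rw [Ne, Ideal.Quotient.eq_zero_iff_mem, Ideal.mem_span_singleton]
  intro h
  have := (pow_dvd_pow_iff (n := 2) (m := 1) (X_sub_C_ne_zero a) (not_isUnit_X_sub_C a)).1
    (by rwa [pow_one])
  omega

instance : Nontrivial 𝔸 := nontrivial_of_ne _ _ (mk_X_sub_C_ne_zero a)

noncomputable def evalQuotSq : 𝔸 →+* K :=
  Ideal.Quotient.lift _ (evalRingHom a) fun f hf => by
    obtain ⟨g, rfl⟩ := Ideal.mem_span_singleton'.1 hf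
    simp

@[simp]
theorem evalQuotSq_mk (f : K[X]) : evalQuotSq a (Ideal.Quotient.mk _ f) = f.eval a := rfl

theorem eq_C_evalQuotSq_add_mul (s : 𝔸) :
    ∃ t, s = Ideal.Quotient.mk _ (C (evalQuotSq a s)) + ε * t := by
  obtain ⟨f, rfl⟩ := Ideal.Quotient.mk_surjective s
  refine ⟨Ideal.Quotient.mk _ (f /ₘ (X - C a)), ?_⟩
  rw [evalQuotSq_mk, ← modByMonic_X_sub_C_eq_C_eval, ← map_mul, ← map_add,
    modByMonic_add_div]

theorem isUnit_iff_evalQuotSq_ne_zero {s : 𝔸} : IsUnit s ↔ evalQuotSq a s ≠ 0 := by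
  refine ⟨fun hs => (hs.map (evalQuotSq a)).ne_zero, fun hs => ?_⟩
  obtain ⟨t, ht⟩ := eq_C_evalQuotSq_add_mul a s
  rw [ht]
  refine IsNilpotent.isUnit_add_left_of_commute ⟨2, ?_⟩ ?_ (Commute.all _ _)
  · rw [mul_pow, mk_X_sub_C_sq, zero_mul]
  · exact (isUnit_C.2 (Ne.isUnit hs)).map _

instance : IsLocalRing 𝔸 :=
  .of_nonunits_add fun s t hs ht => by
    simp only [mem_nonunits_iff, isUnit_iff_evalQuotSq_ne_zero, not_not, map_add] at *
    rw [hs, ht, add_zero]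

theorem maximalIdeal_eq_ker_evalQuotSq : maximalIdeal 𝔸 = RingHom.ker (evalQuotSq a) := by
  ext s
  simp [mem_maximalIdeal, mem_nonunits_iff, isUnit_iff_evalQuotSq_ne_zero]

theorem maximalIdeal_sq_eq_bot : maximalIdeal 𝔸 ^ 2 = ⊥ := by
  rw [eq_bot_iff, sq (maximalIdeal _), Ideal.mul_le]
  intro s hs t ht
  rw [maximalIdeal_eq_ker_evalQuotSq, RingHom.mem_ker] at hs ht
  obtain ⟨s', hs'⟩ := eq_C_evalQuotSq_add_mul a s
  obtain ⟨t', ht'⟩ := eq_C_evalQuotSq_add_mul a t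
  rw [hs, C_0, map_zero, zero_add] at hs'
  rw [ht, C_0, map_zero, zero_add] at ht'
  rw [hs', ht', Ideal.mem_bot]
  linear_combination (s' * t') * mk_X_sub_C_sq a

theorem card_residueField : Nat.card (ResidueField 𝔸) = Nat.card K :=
  Nat.card_congr ((Ideal.quotEquivOfEq (maximalIdeal_eq_ker_evalQuotSq a)).trans
    (RingHom.quotientKerEquivOfSurjective fun c => ⟨Ideal.Quotient.mk _ (C c), by simp⟩)).toEquiv

instance [Finite K] : Finite 𝔸 :=
  have := ((monic_X_sub_C a).pow 2).finite_quotient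
  Module.finite_of_finite K

theorem le_davenportG_units [Finite K] (p : ℕ) [Fact p.Prime] [CharP K p] :
    p ≤ DavenportG 𝔸ˣ := by
  have : CharP 𝔸 p := charP_of_injective_algebraMap (algebraMap K 𝔸).injective p
  obtain ⟨u, hu⟩ : IsUnit (1 + ε) := by simp [isUnit_iff_evalQuotSq_ne_zero]
  calc p = orderOf u := by
        rw [← orderOf_units, hu, orderOf_one_add_of_sq_eq_zero p (mk_X_sub_C_ne_zero a)
          (mk_X_sub_C_sq a)]
    _ ≤ DavenportG 𝔸ˣ := orderOf_le_of_mem_davenportSet davenportG_mem_davenportSet u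

end Polynomial

open Polynomial in
/-- For a prime `p > 2`, the Davenport constant of the multiplicative monoid of
`𝔽_p[X]/⟨(X+1)²⟩` equals the Davenport constant of its group of units. -/
theorem davenport_quotient_sq (p : ℕ) [Fact p.Prime] (hp : 2 < p) :
    DavenportM (Polynomial (ZMod p) ⧸ Ideal.span {((X : Polynomial (ZMod p)) + 1) ^ 2}) =
      DavenportG (Polynomial (ZMod p) ⧸ Ideal.span {((X : Polynomial (ZMod p)) + 1) ^ 2})ˣ := by
  rw [show (X : (ZMod p)[X]) + 1 = X - C (-1) by simp]
  have hp_le := le_davenportG_units (-1 : ZMod p) p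
  refine IsLocalRing.davenportM_eq_davenportG_units_of_sq_eq_bot (maximalIdeal_sq_eq_bot _)
    (by omega) ?_
  rwa [card_residueField, Nat.card_zmod]
end

section
/- Let G be a finite abelian group and let T be a zero-sum free sequence of elements of G of length D(G) − 1. Then every non-identity element of G is the product of the terms of some nonempty subsequence of T; that is, the set of subsequence products of T equals G \ {1}. -/
namespace List

variable {G : Type*} [Group G]

theorem exists_sublist_prod_eq_one_of_prod_take_eq {l : List G} {i j : ℕ} (hij : i < j)
    (hj : j ≤ l.length) (h : (l.take i).prod = (l.take j).prod) :
    ∃ l' : List G, l'.Sublist l ∧ l' ≠ [] ∧ l'.prod = 1 := by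
  have hsplit : l.take i ++ (l.take j).drop i = l.take j := by
    simpa [List.take_take, min_eq_left hij.le] using List.take_append_drop i (l.take j)
  refine ⟨(l.take j).drop i, (List.drop_sublist _ _).trans (List.take_sublist _ _), ?_, ?_⟩
  · rw [← List.length_pos_iff, List.length_drop, List.length_take]
    omega
  · rwa [← hsplit, List.prod_append, left_eq_mul] at h

theorem exists_sublist_prod_eq_one_of_card_le [Fintype G] {l : List G}
    (h : Fintype.card G ≤ l.length) :
    ∃ l' : List G, l'.Sublist l ∧ l' ≠ [] ∧ l'.prod = 1 := by
  have hcard : Fintype.card G < Fintype.card (Fin (l.length + 1)) := by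
    simpa using Nat.lt_succ_of_le h
  obtain ⟨a, b, hab, hprod⟩ :=
    Fintype.exists_ne_map_eq_of_card_lt (fun i : Fin (l.length + 1) => (l.take i).prod) hcard
  rcases Fin.lt_or_lt_of_ne hab with hlt | hlt
  · exact exists_sublist_prod_eq_one_of_prod_take_eq hlt (Nat.lt_succ_iff.mp b.isLt) hprod
  · exact exists_sublist_prod_eq_one_of_prod_take_eq hlt (Nat.lt_succ_iff.mp a.isLt) hprod.symm

end List

section Davenport

variable {G : Type*} [CommGroup G]

theorem Multiset.exists_le_prod_eq_one_of_card_le [Fintype G] {T : Multiset G}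
    (h : Fintype.card G ≤ Multiset.card T) :
    ∃ T' : Multiset G, T' ≤ T ∧ T' ≠ 0 ∧ T'.prod = 1 := by
  induction T using Quotient.inductionOn with
  | h l =>
    obtain ⟨l', hsub, hne, hprod⟩ := List.exists_sublist_prod_eq_one_of_card_le (l := l) h
    exact ⟨l', Multiset.coe_le.mpr hsub.subperm, by simpa using hne, by simpa using hprod⟩

theorem exists_le_prod_eq_one_of_davenportG_le [Fintype G] {T : Multiset G}
    (h : DavenportG G ≤ Multiset.card T) :
    ∃ T' : Multiset G, T' ≤ T ∧ T' ≠ 0 ∧ T'.prod = 1 := by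
  have hmem := Nat.sInf_mem (s := {d : ℕ | 0 < d ∧ ∀ T : Multiset G, d ≤ Multiset.card T →
      ∃ T' : Multiset G, T' ≤ T ∧ T' ≠ 0 ∧ T'.prod = 1})
    ⟨Fintype.card G, Fintype.card_pos, fun _ => Multiset.exists_le_prod_eq_one_of_card_le⟩
  exact hmem.2 T h

theorem exists_le_prod_eq_of_exists_le_cons_inv {T : Multiset G} {g : G} (hg : g ≠ 1)
    (hfree : ∀ T' : Multiset G, T' ≤ T → T' ≠ 0 → T'.prod ≠ 1)
    (h : ∃ S : Multiset G, S ≤ g⁻¹ ::ₘ T ∧ S ≠ 0 ∧ S.prod = 1) :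
    ∃ T' : Multiset G, T' ≤ T ∧ T' ≠ 0 ∧ T'.prod = g := by
  classical
  obtain ⟨S, hle, hne, hprod⟩ := h
  by_cases hmem : g⁻¹ ∈ S
  · have herase : (S.erase g⁻¹).prod = g := by
      rw [← Multiset.prod_erase hmem, inv_mul_eq_one] at hprod
      exact hprod.symm
    refine ⟨S.erase g⁻¹, Multiset.erase_le_iff_le_cons.mpr hle, ?_, herase⟩
    intro h0
    rw [h0, Multiset.prod_zero] at herase
    exact hg herase.symm
  · exact absurd hprod (hfree S ((Multiset.le_cons_of_notMem hmem).mp hle) hne)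

end Davenport

/-- If `T` is a product-one free (zero-sum free) sequence over a finite abelian group `G`
of length `D(G) - 1`, then the set of products of nonempty subsequences of `T` is exactly
`G \ {1}`. -/
theorem subseq_prods_of_maximal_zsf (G : Type*) [CommGroup G] [Fintype G]
    (T : Multiset G) (hT : Multiset.card T = DavenportG G - 1)
    (hfree : ∀ T' : Multiset G, T' ≤ T → T' ≠ 0 → T'.prod ≠ 1) :
    {g : G | ∃ T' : Multiset G, T' ≤ T ∧ T' ≠ 0 ∧ T'.prod = g} = {(1 : G)}ᶜ := by
  ext g
  refine ⟨fun ⟨T', hle, hne, hprod⟩ => hprod ▸ hfree T' hle hne, fun hg => ?_⟩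
  have hcard : DavenportG G ≤ Multiset.card (g⁻¹ ::ₘ T) := by
    rw [Multiset.card_cons, hT]
    omega
  exact exists_le_prod_eq_of_exists_le_cons_inv hg hfree
    (exists_le_prod_eq_one_of_davenportG_le hcard)
end
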